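/- arXiv:0904.0237 — 3 statements merged into one kernel-verified Lean document; each statement's English description precedes it below -/
import Mathlib

section
/- Let G be a group, r a natural number, and let S, S' : Fin r → G be two tuples whose images each generate G. Then the two (2r)-tuples obtained by appending r copies of the identity element of G to S and to S' respectively (i.e. the tuples Fin (r + r) → G equal to S on the first r coordinates and to 1 on the last r coordinates, and likewise for S') are Nielsen equivalent. -/
/-- An elementary Nielsen move on ordered `r`-tuples of elements of a group `G`:
inversion of one entry, permutation (swap) of two entries, or a twist replacing
`g_i` by `g_i * g_j` for some `j ≠ i`, all other entries being kept fixed. -/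
def NielsenMove {G : Type*} [Group G] {r : ℕ} (S S' : Fin r → G) : Prop :=
  (∃ i, S' i = (S i)⁻¹ ∧ ∀ k, k ≠ i → S' k = S k) ∨
  (∃ i j, i ≠ j ∧ S' i = S j ∧ S' j = S i ∧ ∀ k, k ≠ i → k ≠ j → S' k = S k) ∨
  (∃ i j, j ≠ i ∧ S' i = S i * S j ∧ ∀ k, k ≠ i → S' k = S k)

/-- Two tuples are Nielsen equivalent if they lie in the same class of the equivalence
relation generated by the elementary Nielsen moves. -/
def NielsenEquiv {G : Type*} [Group G] {r : ℕ} (S S' : Fin r → G) : Prop :=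
  Relation.EqvGen NielsenMove S S'

/-!
If the entries of a tuple outside position `p` already generate `G`, twists by those entries
and their reverses multiply the `p`-th entry by an arbitrary element of `G`, so it can be replaced by anything.
Changing entries one at a time, a tuple whose entries on `K` generate `G` can therefore be moved
to any tuple agreeing with it on `K`. Writing `1ᵣ` for `r` copies of the identity, this gives
`(S, 1ᵣ) ~ (S, S') ~ (S', S') ~ (S', 1ᵣ)`, the generating block used in each step being
`S`, `S'` and `S'` respectively.
-/

open Function

section

variable {G : Type*} [Group G] {n : ℕ}

theorem NielsenEquiv.refl (T : Fin n → G) : NielsenEquiv T T :=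
  Relation.EqvGen.refl T

theorem NielsenEquiv.symm {T T' : Fin n → G} (h : NielsenEquiv T T') : NielsenEquiv T' T :=
  Relation.EqvGen.symm T T' h

theorem NielsenEquiv.trans {T T' T'' : Fin n → G} (h : NielsenEquiv T T')
    (h' : NielsenEquiv T' T'') : NielsenEquiv T T'' :=
  Relation.EqvGen.trans T T' T'' h h'

theorem nielsenMove_update_mul (T : Fin n → G) {p j : Fin n} (hj : j ≠ p) (x : G) :
    NielsenMove (update T p x) (update T p (x * T j)) := by
  refine Or.inr (Or.inr ⟨p, j, hj, ?_, fun k hk => ?_⟩)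
  · simp [update_of_ne hj]
  · simp [update_of_ne hk]

theorem nielsenEquiv_update_mul (T : Fin n → G) (p : Fin n) {g : G}
    (hg : g ∈ Subgroup.closure (T '' {p}ᶜ)) (x : G) :
    NielsenEquiv (update T p x) (update T p (x * g)) := by
  induction hg using Subgroup.closure_induction generalizing x with
  | mem y hy =>
    obtain ⟨j, hj, rfl⟩ := hy
    exact Relation.EqvGen.rel _ _ (nielsenMove_update_mul T hj x)
  | one => simpa using NielsenEquiv.refl _
  | mul a b _ _ iha ihb => simpa [mul_assoc] using (iha x).trans (ihb (x * a))
  | inv a _ iha => simpa using (iha (x * a⁻¹)).symm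

theorem nielsenEquiv_update (T : Fin n → G) (p : Fin n)
    (htop : Subgroup.closure (T '' {p}ᶜ) = ⊤) (x y : G) :
    NielsenEquiv (update T p x) (update T p y) := by
  simpa using nielsenEquiv_update_mul T p (g := x⁻¹ * y) (htop ▸ Subgroup.mem_top _) x

theorem nielsenEquiv_of_eqOn_of_closure_eq_top {K : Set (Fin n)} {T T' : Fin n → G}
    (hK : Set.EqOn T T' K) (htop : Subgroup.closure (T '' K) = ⊤) :
    NielsenEquiv T T' := by
  classical
  obtain ⟨D, hD⟩ : ∃ D : Finset (Fin n), (D : Set (Fin n)) = Kᶜ := ⟨Kᶜ.toFinset, by simp⟩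
  induction D using Finset.induction_on generalizing K T with
  | empty =>
    have hKuniv : K = Set.univ := Set.compl_empty_iff.mp (by simpa using hD.symm)
    obtain rfl : T = T' := funext fun p => hK (hKuniv ▸ Set.mem_univ p)
    exact NielsenEquiv.refl T
  | @insert a D haD ih =>
    have haK : a ∉ K := by simp [← Set.mem_compl_iff, ← hD]
    have hTa : Subgroup.closure (T '' {a}ᶜ) = ⊤ :=
      eq_top_mono (Subgroup.closure_mono (Set.image_mono fun p hp =>
        Set.mem_compl_singleton_iff.mpr (ne_of_mem_of_not_mem hp haK))) htop
    have hUK : update T a (T' a) '' K = T '' K :=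
      Set.image_congr fun p hp => update_of_ne (ne_of_mem_of_not_mem hp haK) _ _
    have hstep : NielsenEquiv T (update T a (T' a)) := by
      simpa using nielsenEquiv_update T a hTa (T a) (T' a)
    refine hstep.trans (ih (K := insert a K) ?_ ?_ ?_)
    · rintro p (rfl | hp)
      · simp
      · rw [update_of_ne (ne_of_mem_of_not_mem hp haK)]
        exact hK hp
    · exact eq_top_mono (Subgroup.closure_mono (hUK ▸ Set.image_mono (Set.subset_insert a K))) htop
    · ext p
      have hp : p = a ∨ p ∈ D ↔ p ∉ K := by simpa using congrArg (p ∈ ·) hD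
      by_cases hpa : p = a <;> simp_all

theorem nielsenEquiv_append_left {m : ℕ} {S : Fin m → G}
    (hS : Subgroup.closure (Set.range S) = ⊤) (T T' : Fin n → G) :
    NielsenEquiv (Fin.append S T) (Fin.append S T') := by
  refine nielsenEquiv_of_eqOn_of_closure_eq_top (K := Set.range (Fin.castAdd n)) ?_ ?_
  · rintro _ ⟨i, rfl⟩
    simp only [Fin.append_left]
  · rwa [← Set.range_comp,
      show Fin.append S T ∘ Fin.castAdd n = S from funext (Fin.append_left S T)]

theorem nielsenEquiv_append_right {m : ℕ} (S S' : Fin m → G) {T : Fin n → G}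
    (hT : Subgroup.closure (Set.range T) = ⊤) :
    NielsenEquiv (Fin.append S T) (Fin.append S' T) := by
  refine nielsenEquiv_of_eqOn_of_closure_eq_top (K := Set.range (Fin.natAdd m)) ?_ ?_
  · rintro _ ⟨i, rfl⟩
    simp only [Fin.append_right]
  · rwa [← Set.range_comp,
      show Fin.append S T ∘ Fin.natAdd m = T from funext (Fin.append_right S T)]

end

/-- Any two generating `r`-tuples of a group become Nielsen equivalent after `r`
stabilizations, i.e. after appending `r` copies of the identity element to each. -/
theorem nielsenEquiv_after_stabilizations {G : Type*} [Group G] {r : ℕ}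
    (S S' : Fin r → G)
    (hS : Subgroup.closure (Set.range S) = ⊤)
    (hS' : Subgroup.closure (Set.range S') = ⊤) :
    NielsenEquiv (Fin.append S (fun _ : Fin r => (1 : G))) (Fin.append S' (fun _ : Fin r => (1 : G))) :=
  (nielsenEquiv_append_left hS _ S').trans <|
    (nielsenEquiv_append_right S S' hS').trans (nielsenEquiv_append_left hS' S' _)
end

section
/- Let g ≥ 2 and let G_g be the surface group of genus g, i.e. the presented group with generators x_1, …, x_{2g} and the single relator [x_1,x_2]·[x_3,x_4]⋯[x_{2g-1},x_{2g}]. If H is a proper subgroup of G_g of finite index, then the rank of H is strictly larger than 2g. -/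
/-!
Let `n` be the index of `H` and `K` its preimage in the free group `F` on the `2g` generators.
The 1-cocycles of `F` with values in the permutation module `ℚ^(F/K)` are free on the
generators, a space of dimension `2g·n`. A cocycle vanishing on the relator and, at the base
coset, on lifts of the generators of `H` restricts to a homomorphism `K → ℚ` vanishing on
generators of `K`, so by Shapiro's lemma it is a coboundary; coboundaries have dimension
`n - 1`. These `n + rank H` linear conditions thus give `2g·n ≤ n + rank H + n - 1`, i.e.
`rank H ≥ 2n(g - 1) + 1 ≥ 4g - 3 > 2g`.
-/

open scoped commutatorElement

/-- The relator of the genus-`g` surface group: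
`[x_1,x_2]·[x_3,x_4]⋯[x_{2g-1},x_{2g}]`, the product of the commutators of the
consecutive pairs of free generators. -/
def surfaceRelator (g : ℕ) : FreeGroup (Fin (2 * g)) :=
  (List.ofFn fun i : Fin g =>
    ⁅FreeGroup.of (⟨2 * i, by have := i.isLt; omega⟩ : Fin (2 * g)),
      FreeGroup.of (⟨2 * i + 1, by have := i.isLt; omega⟩ : Fin (2 * g))⁆).prod

/-- The surface group of genus `g`: the group presented with `2g` generators
`x_1, …, x_{2g}` and the single relator `[x_1,x_2]·[x_3,x_4]⋯[x_{2g-1},x_{2g}]`. -/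
def SurfaceGroup (g : ℕ) : Type :=
  PresentedGroup ({surfaceRelator g} : Set (FreeGroup (Fin (2 * g))))

instance (g : ℕ) : Group (SurfaceGroup g) :=
  inferInstanceAs (Group (PresentedGroup _))

instance (g : ℕ) : Group.FG (SurfaceGroup g) :=
  Group.fg_iff.mpr
    ⟨Set.range PresentedGroup.of, PresentedGroup.closure_range_of _, Set.finite_range _⟩

section Cocycles

open MulAction Subgroup

-- `X → k` becomes the permutation module `k^X` of the `G`-set `X`.
attribute [local instance] arrowAction

theorem arrowAction_smul_apply {G A B : Type*} [Group G] [MulAction G A] (g : G) (F : A → B)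
    (a : A) : (g • F) a = F (g⁻¹ • a) := rfl

namespace groupCohomology

variable {k G X : Type*} [CommRing k] [Group G] [MulAction G X]

theorem IsCocycle₁.apply_mul {f : G → X → k} (hf : IsCocycle₁ f) (g h : G) (x : X) :
    f (g * h) x = f g x + f h (g⁻¹ • x) := by
  rw [hf g h, Pi.add_apply, arrowAction_smul_apply, add_comm]

theorem IsCocycle₁.apply_inv {f : G → X → k} (hf : IsCocycle₁ f) (g : G) (x : X) :
    f g⁻¹ x = -f g (g • x) := by
  rw [← Pi.neg_apply, ← map_inv_of_isCocycle₁ hf g, arrowAction_smul_apply, inv_smul_smul]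

/-- Injectivity in Shapiro's lemma `H¹(G, k^X) ≅ H¹(stabilizer G x₀, k)`. -/
theorem IsCocycle₁.isCoboundary₁_of_forall_stabilizer [IsPretransitive G X] {f : G → X → k}
    (hf : IsCocycle₁ f) (x₀ : X) (h : ∀ g ∈ stabilizer G x₀, f g x₀ = 0) : IsCoboundary₁ f := by
  choose t ht using exists_smul_eq G x₀
  refine ⟨fun x => f (t x)⁻¹ x₀, fun g => funext fun x => ?_⟩
  have hstab : (t x)⁻¹ * g * t (g⁻¹ • x) ∈ stabilizer G x₀ := by
    rw [mem_stabilizer_iff, mul_smul, mul_smul, ht, smul_inv_smul, inv_smul_eq_iff, ht]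
  have hzero := h _ hstab
  rw [hf.apply_mul, hf.apply_mul, inv_inv, ht, mul_inv_rev, mul_smul, inv_inv, ht] at hzero
  rw [Pi.sub_apply, arrowAction_smul_apply, hf.apply_inv, ht]
  linear_combination -hzero

/-- On `stabilizer G x`, the map `g ↦ f g x` is a homomorphism to `k`; this is its kernel. -/
def IsCocycle₁.stabilizerKer {f : G → X → k} (hf : IsCocycle₁ f) (x : X) : Subgroup G where
  carrier := {g | g ∈ stabilizer G x ∧ f g x = 0}
  one_mem' := ⟨one_mem _, by rw [map_one_of_isCocycle₁ hf, Pi.zero_apply]⟩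
  mul_mem' {g h} hg hh := ⟨mul_mem hg.1 hh.1, by
    rw [hf.apply_mul, inv_smul_eq_iff.2 hg.1.symm, hg.2, hh.2, add_zero]⟩
  inv_mem' {g} hg := ⟨inv_mem hg.1, by rw [hf.apply_inv, hg.1, hg.2, neg_zero]⟩

theorem IsCocycle₁.normalClosure_le_stabilizerKer {f : G → X → k} (hf : IsCocycle₁ f) {x : X}
    {rels : Set G} (hrels : ∀ r ∈ rels, f r = 0) (hx : normalClosure rels ≤ stabilizer G x) :
    normalClosure rels ≤ hf.stabilizerKer x := by
  refine closure_le _ |>.2 fun y hy => ?_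
  have hyx : y • x = x := hx (conjugatesOfSet_subset_normalClosure hy)
  obtain ⟨r, hr, hconj⟩ := Group.mem_conjugatesOfSet_iff.1 hy
  obtain ⟨c, rfl⟩ := isConj_iff.1 hconj
  refine ⟨hyx, ?_⟩
  rw [hf.apply_mul, hf.apply_mul, hf.apply_inv, hrels r hr, ← mul_smul,
    show c * (c * r)⁻¹ = (c * r * c⁻¹)⁻¹ by group, inv_smul_eq_iff.2 hyx.symm]
  simp

theorem IsCocycle₁.isCoboundary₁_of_relators {L rels : Set G}
    {f : G → G ⧸ (closure L ⊔ normalClosure rels) → k} (hf : IsCocycle₁ f)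
    (hrels : ∀ r ∈ rels, f r = 0) (hL : ∀ l ∈ L, f l (1 : G) = 0) : IsCoboundary₁ f := by
  refine hf.isCoboundary₁_of_forall_stabilizer ((1 : G) : G ⧸ _) fun g hg => ?_
  rw [stabilizer_quotient] at hg
  suffices closure L ⊔ normalClosure rels ≤ hf.stabilizerKer (1 : G) from (this hg).2
  refine sup_le (closure_le _ |>.2 fun l hl => ⟨?_, hL l hl⟩) ?_
  · rw [stabilizer_quotient]
    exact mem_sup_left (subset_closure hl)
  · refine hf.normalClosure_le_stabilizerKer hrels ?_
    rw [stabilizer_quotient]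
    exact le_sup_right

variable (k G X) in
def permCocycles : Submodule k (G → X → k) where
  carrier := {f | IsCocycle₁ f}
  zero_mem' _ _ := by funext x; simp [arrowAction_smul_apply]
  add_mem' {f f'} hf hf' g h := by
    funext x
    simp only [Pi.add_apply, arrowAction_smul_apply, hf.apply_mul, hf'.apply_mul]
    ring
  smul_mem' c f hf g h := by
    funext x
    simp only [Pi.smul_apply, Pi.add_apply, arrowAction_smul_apply, hf.apply_mul, smul_eq_mul]
    ring

variable (k G X) in
def permCoboundary : (X → k) →ₗ[k] permCocycles k G X where
  toFun v := ⟨fun g => g • v - v, fun g h => by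
    funext x
    simp only [Pi.sub_apply, Pi.add_apply, arrowAction_smul_apply, mul_smul]
    ring⟩
  map_add' v w := by
    ext g x
    simp only [Submodule.coe_add, Pi.add_apply, Pi.sub_apply, arrowAction_smul_apply]
    ring
  map_smul' c v := by ext g x; simp [arrowAction_smul_apply]; ring

theorem ker_permCoboundary_ne_bot [Nontrivial k] [Nonempty X] :
    LinearMap.ker (permCoboundary k G X) ≠ ⊥ := by
  rw [Submodule.ne_bot_iff]
  refine ⟨fun _ => 1, ?_, fun h => one_ne_zero (congrFun h (Classical.arbitrary X))⟩
  ext g x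
  simp [permCoboundary, arrowAction_smul_apply]

theorem mem_range_permCoboundary {f : permCocycles k G X} (hf : IsCoboundary₁ (f : G → X → k)) :
    f ∈ LinearMap.range (permCoboundary k G X) := by
  obtain ⟨v, hv⟩ := hf
  exact ⟨v, Subtype.ext (funext hv)⟩

end groupCohomology

namespace FreeGroup

open groupCohomology

section

variable {α k X : Type*} [CommRing k] [MulAction (FreeGroup α) X]

/-- A cocycle `f` is the left component of the homomorphism `u ↦ (f u, u)` to `k^X ⋊ G`. -/
def toPermSemidirectProduct (z : α → X → k) :
    FreeGroup α →* (X → Multiplicative k) ⋊[mulAutArrow] FreeGroup α :=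
  FreeGroup.lift fun i => ⟨fun x => .ofAdd (z i x), of i⟩

theorem toPermSemidirectProduct_right (z : α → X → k) (u : FreeGroup α) :
    (toPermSemidirectProduct z u).right = u := by
  have : SemidirectProduct.rightHom.comp (toPermSemidirectProduct z) = MonoidHom.id _ :=
    ext_hom _ _ fun i => by simp [toPermSemidirectProduct]
  exact DFunLike.congr_fun this u

def permCocycle (z : α → X → k) (u : FreeGroup α) : X → k :=
  fun x => ((toPermSemidirectProduct z u).left x).toAdd

theorem isCocycle₁_permCocycle (z : α → X → k) : IsCocycle₁ (permCocycle z) := fun u v => by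
  funext x
  simp [permCocycle, SemidirectProduct.mul_left, toPermSemidirectProduct_right,
    arrowAction_smul_apply, add_comm]

@[simp]
theorem permCocycle_of (z : α → X → k) (i : α) : permCocycle z (of i) = z i := by
  funext x
  simp [permCocycle, toPermSemidirectProduct]

theorem isCocycle₁_ext {f f' : FreeGroup α → X → k} (hf : IsCocycle₁ f) (hf' : IsCocycle₁ f')
    (h : ∀ i, f (of i) = f' (of i)) : f = f' := by
  funext u
  induction u using FreeGroup.induction_on with
  | C1 => rw [map_one_of_isCocycle₁ hf, map_one_of_isCocycle₁ hf']
  | of i => exact h i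
  | inv_of i hi => funext x; rw [hf.apply_inv, hf'.apply_inv, hi]
  | mul u v hu hv => rw [hf u v, hf' u v, hu, hv]

variable (k X) in
noncomputable def permCocyclesEquiv : permCocycles k (FreeGroup α) X ≃ₗ[k] (α → X → k) :=
  LinearEquiv.ofBijective
    (LinearMap.pi fun i => (LinearMap.proj (of i)).comp (permCocycles k (FreeGroup α) X).subtype)
    ⟨fun f f' h => Subtype.ext <| isCocycle₁_ext f.2 f'.2 (congrFun h),
      fun z => ⟨⟨permCocycle z, isCocycle₁_permCocycle z⟩, funext (permCocycle_of z)⟩⟩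

end

variable {α k X : Type*} [Field k] [MulAction (FreeGroup α) X] [Finite α] [Finite X]

instance : FiniteDimensional k (permCocycles k (FreeGroup α) X) :=
  (permCocyclesEquiv k X).symm.finiteDimensional

theorem finrank_permCocycles :
    Module.finrank k (permCocycles k (FreeGroup α) X) = Nat.card α * Nat.card X := by
  have := Fintype.ofFinite α
  have := Fintype.ofFinite X
  simp [(permCocyclesEquiv k X).finrank_eq, Module.finrank_pi_fintype, Nat.card_eq_fintype_card]

end FreeGroup

end Cocycles

theorem finrank_add_one_le_of_ker_le_range {k Z V W : Type*} [Field k] [AddCommGroup Z]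
    [Module k Z] [AddCommGroup V] [Module k V] [AddCommGroup W] [Module k W]
    [FiniteDimensional k Z] [FiniteDimensional k V] [FiniteDimensional k W]
    (f : Z →ₗ[k] W) (β : V →ₗ[k] Z) (hf : LinearMap.ker f ≤ LinearMap.range β)
    (hβ : LinearMap.ker β ≠ ⊥) :
    Module.finrank k Z + 1 ≤ Module.finrank k W + Module.finrank k V := by
  have : Module.finrank k (LinearMap.ker β) ≠ 0 := mt Submodule.finrank_eq_zero.1 hβ
  have := LinearMap.finrank_range_add_finrank_ker f
  have := LinearMap.finrank_range_add_finrank_ker β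
  have := Submodule.finrank_mono hf
  have := (LinearMap.range f).finrank_le
  omega

open Subgroup groupCohomology in
theorem PresentedGroup.index_mul_card_add_one_le {α : Type*} [Finite α] (rels : Set (FreeGroup α))
    [Finite rels] (Q : Subgroup (PresentedGroup rels)) [Group.FG Q] (hQ : Q.index ≠ 0) :
    Q.index * Nat.card α + 1 ≤ Q.index * (Nat.card rels + 1) + Group.rank Q := by
  obtain ⟨S, hS_card, hS⟩ := Group.rank_spec Q
  choose lift hlift using fun q : Q => mk_surjective rels (q : PresentedGroup rels)
  set K := closure (lift '' S) ⊔ normalClosure rels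
  have hK : Q.comap (mk rels) = K := by
    have hker_mk : (mk rels).ker = normalClosure rels := by ext; exact mk_eq_one_iff
    have hQ_eq : Q = (closure (lift '' S)).map (mk rels) := by
      rw [MonoidHom.map_closure, ← Set.image_comp,
        show mk rels ∘ lift = Q.subtype from funext hlift, ← MonoidHom.map_closure, hS,
        ← MonoidHom.range_eq_map, range_subtype]
    rw [hQ_eq, comap_map_eq, hker_mk]
  have hKindex : K.index = Q.index := hK ▸ index_comap_of_surjective Q (mk_surjective rels)
  have : K.FiniteIndex := ⟨hKindex ▸ hQ⟩
  let evalRelsGens : permCocycles ℚ (FreeGroup α) (FreeGroup α ⧸ K) →ₗ[ℚ]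
      (rels → FreeGroup α ⧸ K → ℚ) × (S → ℚ) :=
    { toFun f := (fun r => f.1 r, fun s => f.1 (lift s) (1 : FreeGroup α))
      map_add' _ _ := rfl
      map_smul' _ _ := rfl }
  have hker : LinearMap.ker evalRelsGens ≤ LinearMap.range (permCoboundary ℚ _ _) :=
    fun f hf => by
      refine mem_range_permCoboundary (f.2.isCoboundary₁_of_relators (fun r hr => ?_) ?_)
      · exact congrFun (congrArg Prod.fst hf) ⟨r, hr⟩
      · rintro _ ⟨s, hs, rfl⟩
        exact congrFun (congrArg Prod.snd hf) ⟨s, hs⟩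
  have hrank := finrank_add_one_le_of_ker_le_range _ _ hker ker_permCoboundary_ne_bot
  have := Fintype.ofFinite rels
  have := Fintype.ofFinite (FreeGroup α ⧸ K)
  have hcard : Fintype.card (FreeGroup α ⧸ K) = Q.index :=
    Nat.card_eq_fintype_card.symm.trans hKindex
  simp only [FreeGroup.finrank_permCocycles, Module.finrank_prod, Module.finrank_pi_fintype,
    Module.finrank_self, Finset.sum_const, Finset.card_univ, smul_eq_mul, mul_one,
    Fintype.card_coe, Nat.card_eq_fintype_card, hcard, hS_card] at hrank ⊢
  linarith

/-- For `g ≥ 2`, every proper finite index subgroup of the genus-`g` surface group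
has rank strictly larger than `2g`. (The subgroup is finitely generated by
Schreier's lemma, which provides the `Group.FG` instance needed to speak of its
rank.) -/
theorem surfaceGroup_rank_finiteIndex_subgroup (g : ℕ) (hg : 2 ≤ g)
    (H : Subgroup (SurfaceGroup g)) (hprop : H ≠ ⊤) (hindex : H.index ≠ 0) :
    2 * g <
      @Group.rank H _ (@Subgroup.fg_of_index_ne_zero _ _ H _ ⟨hindex⟩) := by
  have : H.FiniteIndex := ⟨hindex⟩
  -- `SurfaceGroup g` is not reducibly `PresentedGroup _`, so the instance is passed by hand.
  have hbound : H.index * Nat.card (Fin (2 * g)) + 1 ≤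
      H.index * (Nat.card ({surfaceRelator g} : Set _) + 1) + Group.rank H :=
    @PresentedGroup.index_mul_card_add_one_le _ _ _ _ H (Subgroup.fg_of_index_ne_zero H) hindex
  rw [Nat.card_eq_fintype_card, Fintype.card_fin, Nat.card_unique] at hbound
  have hH : 2 ≤ H.index := by
    have : H.index ≠ 1 := mt Subgroup.index_eq_one.1 hprop
    omega
  nlinarith [Nat.mul_le_mul hH hg]
end

section
/- Let (F, d) be a nonempty connected metric space equipped with a Borel measure μ, and let ε > 0 and c > 0 be such that μ(B(x, ε)) ≥ c for every x ∈ F, where B(x, ε) is the open ball of radius ε around x, and such that μ(F) < ∞. Then the diameter of F is at most 4·ε·μ(F)/c. -/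
open MeasureTheory Metric

/-!
Join `x` to `y` by a shortest chain `x = z₀, z₁, …, zₙ = y` with consecutive points closer than
`2ε`; it exists because the points reachable from `x` by such chains form a clopen set. By
minimality, `zᵢ` and `zⱼ` are at distance at least `2ε` whenever `j ≥ i + 2`, so the `ε`-balls
around `z₀, z₂, z₄, …` are pairwise disjoint. There are `⌊n/2⌋ + 1` of them, each of measure at
least `c`, hence `(⌊n/2⌋ + 1) c ≤ μ(F)`, while `d(x, y) ≤ 2εn ≤ 4ε(⌊n/2⌋ + 1)`.
-/

section Chain

variable {α : Type*} [PseudoMetricSpace α] {r : ℝ} {m n : ℕ} {x y w : α}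

def ChainConnected (r : ℝ) (n : ℕ) (x y : α) : Prop :=
  ∃ z : ℕ → α, z 0 = x ∧ z n = y ∧ ∀ i < n, dist (z i) (z (i + 1)) < r

theorem chainConnected_one (h : dist x y < r) : ChainConnected r 1 x y :=
  ⟨fun k => if k = 0 then x else y, rfl, rfl, fun i hi => by simpa [Nat.lt_one_iff.mp hi]⟩

theorem ChainConnected.trans (hxy : ChainConnected r m x y) (hyw : ChainConnected r n y w) :
    ChainConnected r (m + n) x w := by
  obtain ⟨z, hz0, hzm, hz⟩ := hxy
  obtain ⟨z', hz'0, hz'n, hz'⟩ := hyw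
  refine ⟨fun k => if k ≤ m then z k else z' (k - m), by simp [hz0], ?_, ?_⟩
  · by_cases hn : n = 0 <;> simp_all
  intro i hi
  rcases lt_trichotomy i m with h | rfl | h
  · simpa [h.le, Nat.succ_le_of_lt h] using hz i h
  · simpa [hzm, ← hz'0] using hz' 0 (by omega)
  · simpa [h.not_ge, (h.trans (Nat.lt_succ_self i)).not_ge, Nat.sub_add_comm h.le]
      using hz' (i - m) (by omega)

theorem ChainConnected.dist_le (h : ChainConnected r n x y) : dist x y ≤ n * r := by
  obtain ⟨z, rfl, rfl, hz⟩ := h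
  calc dist (z 0) (z n) ≤ ∑ i ∈ Finset.range n, dist (z i) (z (i + 1)) :=
        dist_le_range_sum_dist z n
    _ ≤ ∑ _i ∈ Finset.range n, r :=
      Finset.sum_le_sum fun i hi => (hz i (Finset.mem_range.mp hi)).le
    _ = n * r := by simp

theorem exists_chainConnected [PreconnectedSpace α] (hr : 0 < r) (x y : α) :
    ∃ n, ChainConnected r n x y := by
  refine PreconnectedSpace.induction₂' (fun x y => ∃ n, ChainConnected r n x y) (fun x => ?_)
    ⟨fun _ _ _ ⟨m, hm⟩ ⟨n, hn⟩ => ⟨m + n, hm.trans hn⟩⟩ x y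
  filter_upwards [ball_mem_nhds x hr] with y hy
  exact ⟨⟨1, chainConnected_one (mem_ball'.mp hy)⟩, ⟨1, chainConnected_one (mem_ball.mp hy)⟩⟩

theorem chainConnected_shortcut {z : ℕ → α} {i j : ℕ}
    (hz : ∀ k < n, dist (z k) (z (k + 1)) < r) (hij : i ≤ j) (hjn : j ≤ n)
    (hclose : dist (z i) (z j) < r) :
    ChainConnected r (i + 1 + (n - j)) (z 0) (z n) := by
  have hinit : ChainConnected r i (z 0) (z i) := ⟨z, rfl, rfl, fun k hk => hz k (by omega)⟩
  have htail : ChainConnected r (n - j) (z j) (z n) :=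
    ⟨fun k => z (j + k), rfl, by simp [Nat.add_sub_cancel' hjn],
      fun k hk => hz (j + k) (by omega)⟩
  exact (hinit.trans (chainConnected_one hclose)).trans htail

theorem exists_separated_chain [PreconnectedSpace α] (hr : 0 < r) (x y : α) :
    ∃ n, ∃ z : ℕ → α, z 0 = x ∧ z n = y ∧ (∀ i < n, dist (z i) (z (i + 1)) < r) ∧
      ∀ i j, i + 2 ≤ j → j ≤ n → r ≤ dist (z i) (z j) := by
  classical
  have hchain := exists_chainConnected hr x y
  obtain ⟨z, hz0, hzn, hz⟩ := Nat.find_spec hchain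
  refine ⟨_, z, hz0, hzn, hz, fun i j hij hjn => ?_⟩
  by_contra! hlt
  refine Nat.find_min hchain (m := i + 1 + (Nat.find hchain - j)) (by omega) ?_
  simpa [hz0, hzn] using chainConnected_shortcut hz (by omega) hjn hlt

end Chain

theorem card_mul_le_measure_univ_of_separated {α ι : Type*} [PseudoMetricSpace α]
    [MeasurableSpace α] [OpensMeasurableSpace α] {μ : Measure α} {ε : ℝ} {c : ENNReal}
    (s : Finset ι) (p : ι → α) (hball : ∀ i ∈ s, c ≤ μ (ball (p i) ε))
    (hsep : (s : Set ι).Pairwise fun i j => 2 * ε ≤ dist (p i) (p j)) :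
    s.card * c ≤ μ Set.univ :=
  calc s.card * c = ∑ _i ∈ s, c := by simp
    _ ≤ ∑ i ∈ s, μ (ball (p i) ε) := Finset.sum_le_sum hball
    _ ≤ μ Set.univ :=
      sum_measure_le_measure_univ (fun _ _ => measurableSet_ball.nullMeasurableSet)
        fun i hi j hj hij => (ball_disjoint_ball (by linarith [hsep hi hj hij])).aedisjoint

theorem diam_le_of_measure_ball_ge_general {F : Type*} [MetricSpace F]
    [MeasurableSpace F] [BorelSpace F] [ConnectedSpace F]
    (μ : Measure F) (ε c : ℝ) (hε : 0 < ε) (hc : 0 < c)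
    (hball : ∀ x : F, ENNReal.ofReal c ≤ μ (ball x ε))
    (hfin : μ Set.univ < ⊤) :
    diam (Set.univ : Set F) ≤ 4 * ε * (μ Set.univ).toReal / c := by
  refine diam_le_of_forall_dist_le (by positivity) fun x _ y _ => ?_
  obtain ⟨n, z, rfl, rfl, hz, hsep⟩ := exists_separated_chain (by positivity : 0 < 2 * ε) x y
  have hpack := card_mul_le_measure_univ_of_separated (μ := μ) (Finset.range (n / 2 + 1))
    (fun k => z (2 * k)) (fun _ _ => hball _) fun k hk l hl hkl => by
      simp only [Finset.coe_range, Set.mem_Iio] at hk hl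
      rcases hkl.lt_or_gt with h | h
      · exact hsep _ _ (by omega) (by omega)
      · exact dist_comm (z (2 * k)) _ ▸ hsep _ _ (by omega) (by omega)
  have hcount : ((n / 2 + 1 : ℕ) : ℝ) * c ≤ (μ Set.univ).toReal := by
    have := ENNReal.toReal_mono hfin.ne hpack
    rwa [ENNReal.toReal_mul, ENNReal.toReal_ofReal hc.le, ENNReal.toReal_natCast,
      Finset.card_range] at this
  have hn : (n : ℝ) ≤ 2 * ((n / 2 + 1 : ℕ) : ℝ) := by
    exact_mod_cast (by omega : n ≤ 2 * (n / 2 + 1))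
  calc dist (z 0) (z n) ≤ n * (2 * ε) := ChainConnected.dist_le ⟨z, rfl, rfl, hz⟩
    _ ≤ 4 * ε * ((n / 2 + 1 : ℕ) : ℝ) := by nlinarith
    _ ≤ 4 * ε * (μ Set.univ).toReal / c := by
      rw [mul_div_assoc]; gcongr; rwa [le_div_iff₀ hc]

/-- The packing argument behind the bounded diameter lemma for minimal surfaces:
if `F` is a nonempty connected metric space carrying a Borel measure `μ` of finite
total mass such that every open ball of radius `ε` has measure at least `c > 0`,
then the diameter of `F` is at most `4·ε·μ(F)/c`. -/
theorem diam_le_of_measure_ball_ge {F : Type*} [MetricSpace F]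
    [MeasurableSpace F] [BorelSpace F] [Nonempty F] [ConnectedSpace F]
    (μ : Measure F) (ε c : ℝ) (hε : 0 < ε) (hc : 0 < c)
    (hball : ∀ x : F, ENNReal.ofReal c ≤ μ (ball x ε))
    (hfin : μ Set.univ < ⊤) :
    diam (Set.univ : Set F) ≤ 4 * ε * (μ Set.univ).toReal / c :=
  diam_le_of_measure_ball_ge_general μ ε c hε hc hball hfin
end
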